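/- Let 0 < ξ < 1 and k > 0, and for integers m define the ratio R_m = (∫₀^{kξ} (J_m'(r)² r + (m²/r) J_m(r)²) dr) / (∫₀^{k} (J_m'(r)² r + (m²/r) J_m(r)²) dr). Then, as m → ∞, R_m ~ ξ^{2m}; in particular R_m → 0. -/

import Mathlib

open Filter MeasureTheory intervalIntegral

/-- The Bessel function of the first kind of integer order `m`,
defined by its power series. -/
noncomputable def besselJ (m : ℕ) (x : ℝ) : ℝ :=
  ∑' n : ℕ, ((-1 : ℝ) ^ n / (n.factorial * (n + m).factorial)) * (x / 2) ^ (2 * n + m)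

noncomputable def besselTerm (m n : ℕ) (x : ℝ) : ℝ :=
  ((-1 : ℝ) ^ n / (n.factorial * (n + m).factorial)) * (x / 2) ^ (2 * n + m)

noncomputable def besselDTerm (m n : ℕ) (x : ℝ) : ℝ :=
  ((-1 : ℝ) ^ n / (n.factorial * (n + m).factorial)) *
    ((2 * n + m) * (x / 2) ^ (2 * n + m - 1) / 2)

lemma besselJ_eq_tsum (m : ℕ) (x : ℝ) : besselJ m x = ∑' n, besselTerm m n x := rfl

lemma abs_besselTerm (m n : ℕ) (x : ℝ) :
    |besselTerm m n x| = (|x| / 2) ^ (2 * n + m) / ((n.factorial : ℝ) * ((n + m).factorial : ℝ)) := by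
  unfold besselTerm
  rw [abs_mul, abs_div, abs_pow, abs_pow, abs_neg, abs_one, one_pow, abs_div, abs_two,
    abs_of_nonneg (by positivity : (0:ℝ) ≤ (n.factorial : ℝ) * ((n + m).factorial : ℝ))]
  ring

lemma summable_abs_besselTerm (m : ℕ) (x : ℝ) : Summable fun n => |besselTerm m n x| := by
  set q := max 1 (|x| / 2) with hq
  have hq1 : (1:ℝ) ≤ q := le_max_left _ _
  have hxq : |x| / 2 ≤ q := le_max_right _ _
  have hx0 : (0:ℝ) ≤ |x| / 2 := by positivity
  refine Summable.of_nonneg_of_le (fun n => abs_nonneg _) (fun n => ?_)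
    ((Real.summable_pow_div_factorial (q ^ 2)).mul_left (q ^ m))
  rw [abs_besselTerm]
  have h1 : (|x| / 2) ^ (2 * n + m) ≤ q ^ (2 * n + m) := pow_le_pow_left₀ hx0 hxq _
  have h2 : (n.factorial : ℝ) ≤ (n.factorial : ℝ) * ((n + m).factorial : ℝ) := by
    exact_mod_cast Nat.le_mul_of_pos_right _ (Nat.factorial_pos _)
  have h3 : (0:ℝ) < n.factorial := by exact_mod_cast Nat.factorial_pos n
  calc (|x| / 2) ^ (2 * n + m) / ((n.factorial : ℝ) * ((n + m).factorial : ℝ))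
      ≤ q ^ (2 * n + m) / (n.factorial : ℝ) := by
        apply div_le_div₀ (by positivity) h1 h3 h2
    _ = q ^ m * ((q ^ 2) ^ n / n.factorial) := by
        rw [pow_add, pow_mul]; ring

lemma summable_besselTerm (m : ℕ) (x : ℝ) : Summable fun n => besselTerm m n x :=
  (summable_abs_besselTerm m x).of_abs

lemma abs_besselDTerm (m n : ℕ) (x : ℝ) :
    |besselDTerm m n x| = ((2 * n + m : ℕ) : ℝ) * (|x| / 2) ^ (2 * n + m - 1) /
      (2 * (n.factorial : ℝ) * ((n + m).factorial : ℝ)) := by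
  unfold besselDTerm
  simp only [abs_mul, abs_div, abs_pow, abs_neg, abs_one, one_pow, abs_two, Nat.abs_cast,
    abs_of_nonneg (show (0:ℝ) ≤ 2 * (n:ℝ) + (m:ℝ) by positivity)]
  push_cast
  ring

lemma hasDerivAt_besselTerm (m n : ℕ) (x : ℝ) :
    HasDerivAt (besselTerm m n) (besselDTerm m n x) x := by
  have h : HasDerivAt (fun y : ℝ => (y / 2) ^ (2 * n + m))
      (((2 * n + m : ℕ) : ℝ) * (x / 2) ^ (2 * n + m - 1) * (1 / 2)) x := by
    simpa using ((hasDerivAt_id x).div_const 2).fun_pow (2 * n + m)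
  have h2 := h.const_mul ((-1 : ℝ) ^ n / (n.factorial * (n + m).factorial))
  refine h2.congr_deriv ?_
  unfold besselDTerm; push_cast; ring

lemma hasDerivAt_besselJ (m : ℕ) (x : ℝ) :
    HasDerivAt (besselJ m) (∑' n, besselDTerm m n x) x := by
  set R := |x| + 1 with hR
  have hR0 : (0:ℝ) < R := by positivity
  set q := max 1 (R / 2) with hq
  have hq1 : (1:ℝ) ≤ q := le_max_left _ _
  have hq0 : (0:ℝ) < q := lt_of_lt_of_le one_pos hq1
  have hRq : R / 2 ≤ q := le_max_right _ _
  have hxmem : x ∈ Set.Ioo (-R) R := by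
    constructor <;> [linarith [neg_abs_le x]; linarith [le_abs_self x]]
  exact hasDerivAt_tsum_of_isPreconnected
    (u := fun n => ((m:ℝ) + 2) * q ^ m * ((2 * q ^ 2) ^ n / n.factorial))
    (((Real.summable_pow_div_factorial (2 * q ^ 2)).mul_left _))
    isOpen_Ioo ((convex_Ioo _ _).isPreconnected)
    (fun n y _ => hasDerivAt_besselTerm m n y)
    (fun n y hy => by
      have hy' : |y| ≤ R := by
        rw [abs_le]; exact ⟨hy.1.le, hy.2.le⟩
      have hyq : |y| / 2 ≤ q := le_trans (by linarith) hRq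
      have hy0 : (0:ℝ) ≤ |y| / 2 := by positivity
      have hnat : (2 * n + m : ℕ) ≤ (m + 2) * 2 ^ n := by
        calc 2 * n + m ≤ (m + 2) * (n + 1) := by nlinarith
          _ ≤ (m + 2) * 2 ^ n := Nat.mul_le_mul_left _ (Nat.succ_le_of_lt (Nat.lt_two_pow_self (n := n)))
      have hfac : (1:ℝ) ≤ (n + m).factorial := by
        exact_mod_cast Nat.one_le_iff_ne_zero.mpr (Nat.factorial_pos _).ne'
      rw [Real.norm_eq_abs, abs_besselDTerm]
      have hpow : (|y| / 2) ^ (2 * n + m - 1) ≤ q ^ (2 * n + m) :=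
        le_trans (pow_le_pow_left₀ hy0 hyq _) (pow_le_pow_right₀ hq1 (Nat.sub_le _ _))
      have hnum : ((2 * n + m : ℕ) : ℝ) * (|y| / 2) ^ (2 * n + m - 1) ≤
          (((m:ℝ) + 2) * 2 ^ n) * q ^ (2 * n + m) := by
        apply mul_le_mul _ hpow (by positivity) (by positivity)
        exact_mod_cast hnat
      calc ((2 * n + m : ℕ) : ℝ) * (|y| / 2) ^ (2 * n + m - 1) /
            (2 * (n.factorial : ℝ) * ((n + m).factorial : ℝ))
          ≤ (((m:ℝ) + 2) * 2 ^ n) * q ^ (2 * n + m) / (n.factorial : ℝ) := by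
            apply div_le_div₀ (by positivity) hnum
              (by exact_mod_cast Nat.factorial_pos n)
            nlinarith [ (by exact_mod_cast Nat.factorial_pos n : (0:ℝ) < n.factorial) ]
        _ = ((m:ℝ) + 2) * q ^ m * ((2 * q ^ 2) ^ n / n.factorial) := by
            rw [pow_add, pow_mul, mul_pow]; ring)
    hxmem (summable_besselTerm m x) hxmem

lemma deriv_besselJ (m : ℕ) (x : ℝ) :
    deriv (besselJ m) x = ∑' n, besselDTerm m n x := (hasDerivAt_besselJ m x).deriv

noncomputable def bC (k : ℝ) : ℝ := ∑' n : ℕ, (3 * (k / 2) ^ 2) ^ n / n.factorial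

lemma summable_bC (k : ℝ) : Summable fun n : ℕ => (3 * (k / 2) ^ 2) ^ n / n.factorial :=
  Real.summable_pow_div_factorial _

lemma shifted_tsum_le_bC (k : ℝ) (hk : 0 < k) :
    ∑' n : ℕ, (3 * (k / 2) ^ 2) ^ (n + 1) / (n + 1).factorial ≤ bC k := by
  have hs := summable_bC k
  have hnn : (0:ℝ) ≤ ∑' n : ℕ, (3 * (k / 2) ^ 2) ^ (n + 1) / ((n + 1).factorial : ℝ) :=
    tsum_nonneg fun n => by positivity
  unfold bC
  rw [Summable.tsum_eq_zero_add hs]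
  simp only [pow_zero, Nat.factorial_zero, Nat.cast_one, div_one]
  linarith

set_option maxHeartbeats 1000000 in
lemma besselJ_approx (k : ℝ) (hk : 0 < k) (m : ℕ) (r : ℝ) (hr0 : 0 ≤ r) (hrk : r ≤ k) :
    |besselJ m r - (r / 2) ^ m / m.factorial| ≤
      bC k / (m + 1) * ((r / 2) ^ m / m.factorial) := by
  have hsum := summable_besselTerm m r
  have h0 : besselTerm m 0 r = (r / 2) ^ m / m.factorial := by
    unfold besselTerm
    norm_num
    ring
  rw [besselJ_eq_tsum, Summable.tsum_eq_zero_add hsum, h0, add_sub_cancel_left]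
  have hmf : (0:ℝ) < m.factorial := by exact_mod_cast Nat.factorial_pos m
  have key : ∀ n : ℕ, |besselTerm m (n + 1) r| ≤
      (r / 2) ^ m / m.factorial / (m + 1) * ((3 * (k / 2) ^ 2) ^ (n + 1) / (n + 1).factorial) := by
    intro n
    rw [abs_besselTerm, abs_of_nonneg hr0]
    have hnf : (0:ℝ) < (n + 1).factorial := by exact_mod_cast Nat.factorial_pos (n + 1)
    have hnum : (r / 2) ^ (2 * (n + 1) + m) ≤ (3 * (k / 2) ^ 2) ^ (n + 1) * (r / 2) ^ m := by
      rw [pow_add, pow_mul]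
      apply mul_le_mul_of_nonneg_right _ (by positivity)
      exact pow_le_pow_left₀ (by positivity) (by nlinarith) _
    have hden : ((n + 1).factorial : ℝ) * (((m:ℝ) + 1) * m.factorial) ≤
        ((n + 1).factorial : ℝ) * ((n + 1 + m).factorial : ℝ) := by
      apply mul_le_mul_of_nonneg_left _ hnf.le
      have : (m + 1).factorial ≤ (n + 1 + m).factorial := Nat.factorial_le (by omega)
      calc ((m:ℝ) + 1) * m.factorial = ((m + 1).factorial : ℝ) := by
            rw [Nat.factorial_succ]; push_cast; ring
        _ ≤ _ := by exact_mod_cast this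
    calc (r / 2) ^ (2 * (n + 1) + m) / (((n + 1).factorial : ℝ) * ((n + 1 + m).factorial : ℝ))
        ≤ ((3 * (k / 2) ^ 2) ^ (n + 1) * (r / 2) ^ m) /
            (((n + 1).factorial : ℝ) * (((m:ℝ) + 1) * m.factorial)) :=
          div_le_div₀ (by positivity) hnum (by positivity) hden
      _ = (r / 2) ^ m / m.factorial / (m + 1) *
            ((3 * (k / 2) ^ 2) ^ (n + 1) / (n + 1).factorial) := by
          field_simp
  have hs1 : Summable fun n => |besselTerm m (n + 1) r| :=
    (summable_nat_add_iff 1).2 (summable_abs_besselTerm m r)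
  have hs2 : Summable fun n : ℕ =>
      (r / 2) ^ m / m.factorial / (m + 1) * ((3 * (k / 2) ^ 2) ^ (n + 1) / (n + 1).factorial) :=
    ((summable_nat_add_iff 1).2 (summable_bC k)).mul_left _
  calc |∑' n, besselTerm m (n + 1) r| ≤ ∑' n, |besselTerm m (n + 1) r| := by
        have h' := norm_tsum_le_tsum_norm (f := fun n => besselTerm m (n + 1) r)
          (by simpa only [Real.norm_eq_abs] using hs1)
        simpa only [Real.norm_eq_abs] using h' 
    _ ≤ ∑' n : ℕ, (r / 2) ^ m / m.factorial / (m + 1) *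
          ((3 * (k / 2) ^ 2) ^ (n + 1) / (n + 1).factorial) := Summable.tsum_le_tsum key hs1 hs2
    _ = (r / 2) ^ m / m.factorial / (m + 1) *
          ∑' n : ℕ, (3 * (k / 2) ^ 2) ^ (n + 1) / (n + 1).factorial := tsum_mul_left
    _ ≤ (r / 2) ^ m / m.factorial / (m + 1) * bC k := by
        apply mul_le_mul_of_nonneg_left (shifted_tsum_le_bC k hk) (by positivity)
    _ = bC k / (m + 1) * ((r / 2) ^ m / m.factorial) := by ring

lemma summable_abs_besselDTerm (m : ℕ) (x : ℝ) : Summable fun n => |besselDTerm m n x| := by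
  set q := max 1 (|x| / 2) with hq
  have hq1 : (1:ℝ) ≤ q := le_max_left _ _
  have hq0 : (0:ℝ) < q := lt_of_lt_of_le one_pos hq1
  have hxq : |x| / 2 ≤ q := le_max_right _ _
  have hx0 : (0:ℝ) ≤ |x| / 2 := by positivity
  refine Summable.of_nonneg_of_le (fun n => abs_nonneg _) (fun n => ?_)
    ((Real.summable_pow_div_factorial (2 * q ^ 2)).mul_left (((m:ℝ) + 2) * q ^ m))
  have hnat : (2 * n + m : ℕ) ≤ (m + 2) * 2 ^ n := by
    calc 2 * n + m ≤ (m + 2) * (n + 1) := by nlinarith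
      _ ≤ (m + 2) * 2 ^ n := Nat.mul_le_mul_left _ (Nat.succ_le_of_lt (Nat.lt_two_pow_self (n := n)))
  rw [abs_besselDTerm]
  have hpow : (|x| / 2) ^ (2 * n + m - 1) ≤ q ^ (2 * n + m) :=
    le_trans (pow_le_pow_left₀ hx0 hxq _) (pow_le_pow_right₀ hq1 (Nat.sub_le _ _))
  have hnum : ((2 * n + m : ℕ) : ℝ) * (|x| / 2) ^ (2 * n + m - 1) ≤
      (((m:ℝ) + 2) * 2 ^ n) * q ^ (2 * n + m) := by
    apply mul_le_mul _ hpow (by positivity) (by positivity)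
    exact_mod_cast hnat
  have hfac : (1:ℝ) ≤ (n + m).factorial := by
    exact_mod_cast Nat.one_le_iff_ne_zero.mpr (Nat.factorial_pos _).ne'
  calc ((2 * n + m : ℕ) : ℝ) * (|x| / 2) ^ (2 * n + m - 1) /
        (2 * (n.factorial : ℝ) * ((n + m).factorial : ℝ))
      ≤ (((m:ℝ) + 2) * 2 ^ n) * q ^ (2 * n + m) / (n.factorial : ℝ) := by
        apply div_le_div₀ (by positivity) hnum (by exact_mod_cast Nat.factorial_pos n)
        nlinarith [(by exact_mod_cast Nat.factorial_pos n : (0:ℝ) < n.factorial)]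
    _ = ((m:ℝ) + 2) * q ^ m * ((2 * q ^ 2) ^ n / n.factorial) := by
        rw [pow_add, pow_mul, mul_pow]; ring

lemma summable_besselDTerm (m : ℕ) (x : ℝ) : Summable fun n => besselDTerm m n x :=
  (summable_abs_besselDTerm m x).of_abs

set_option maxHeartbeats 1000000 in
lemma besselD_approx (k : ℝ) (hk : 0 < k) (m : ℕ) (hm : 1 ≤ m) (r : ℝ)
    (hr0 : 0 ≤ r) (hrk : r ≤ k) :
    |deriv (besselJ m) r - (m : ℝ) * (r / 2) ^ (m - 1) / (2 * m.factorial)| ≤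
      bC k / (m + 1) * ((m : ℝ) * (r / 2) ^ (m - 1) / (2 * m.factorial)) := by
  obtain ⟨q, rfl⟩ : ∃ q, m = q + 1 := ⟨m - 1, by omega⟩
  simp only [Nat.add_sub_cancel]
  set m := q + 1 with hmq
  rw [deriv_besselJ]
  have hsum := summable_besselDTerm m r
  have h0 : besselDTerm m 0 r = (m : ℝ) * (r / 2) ^ q / (2 * m.factorial) := by
    unfold besselDTerm
    norm_num [hmq]
    ring
  rw [Summable.tsum_eq_zero_add hsum, h0, add_sub_cancel_left]
  have hmf : (0:ℝ) < m.factorial := by exact_mod_cast Nat.factorial_pos m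
  have key : ∀ n : ℕ, |besselDTerm m (n + 1) r| ≤
      (m : ℝ) * (r / 2) ^ q / (2 * m.factorial) / (m + 1) *
        ((3 * (k / 2) ^ 2) ^ (n + 1) / (n + 1).factorial) := by
    intro n
    rw [abs_besselDTerm, abs_of_nonneg hr0]
    have he : 2 * (n + 1) + m - 1 = q + 2 * (n + 1) := by omega
    rw [he]
    have hnf : (0:ℝ) < (n + 1).factorial := by exact_mod_cast Nat.factorial_pos (n + 1)
    have hnat : (2 * (n + 1) + m : ℕ) ≤ m * 3 ^ (n + 1) := by
      have h1 : 2 * (n + 1) + m ≤ m * (2 * n + 3) := by nlinarith [hm]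
      have h2 : 2 * n + 3 ≤ 3 ^ (n + 1) := by
        have := Nat.lt_pow_self (n := n) (by norm_num : 1 < 3)
        calc 2 * n + 3 ≤ 3 * (n + 1) := by omega
          _ ≤ 3 * 3 ^ n := by omega
          _ = 3 ^ (n + 1) := by rw [pow_succ]; ring
      exact le_trans h1 (Nat.mul_le_mul_left _ h2)
    have hpow : (r / 2) ^ (q + 2 * (n + 1)) ≤ (r / 2) ^ q * (3 * (k / 2) ^ 2) ^ (n + 1) := by
      rw [pow_add, pow_mul]
      apply mul_le_mul_of_nonneg_left _ (by positivity)
      exact pow_le_pow_left₀ (by positivity) (by nlinarith) _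
    have hc : ((2 * (n + 1) + m : ℕ) : ℝ) ≤ (m : ℝ) * 3 ^ (n + 1) := by exact_mod_cast hnat
    have hp2 : ((r / 2) ^ 2) ^ (n + 1) ≤ ((k / 2) ^ 2) ^ (n + 1) :=
      pow_le_pow_left₀ (by positivity) (by nlinarith) _
    have hrq : (0:ℝ) ≤ (r / 2) ^ q := pow_nonneg (by linarith) _
    have hnum : ((2 * (n + 1) + m : ℕ) : ℝ) * (r / 2) ^ (q + 2 * (n + 1)) ≤
        (m : ℝ) * ((r / 2) ^ q * (3 * (k / 2) ^ 2) ^ (n + 1)) := by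
      calc ((2 * (n + 1) + m : ℕ) : ℝ) * (r / 2) ^ (q + 2 * (n + 1))
          = ((2 * (n + 1) + m : ℕ) : ℝ) * ((r / 2) ^ q * ((r / 2) ^ 2) ^ (n + 1)) := by
            rw [pow_add, pow_mul]
        _ ≤ ((m : ℝ) * 3 ^ (n + 1)) * ((r / 2) ^ q * ((k / 2) ^ 2) ^ (n + 1)) := by
            apply mul_le_mul hc (mul_le_mul_of_nonneg_left hp2 hrq) _ (by positivity)
            exact mul_nonneg hrq (pow_nonneg (by positivity) _)
        _ = (m : ℝ) * ((r / 2) ^ q * (3 * (k / 2) ^ 2) ^ (n + 1)) := by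
            rw [mul_pow]; ring
    have hrhs0 : (0:ℝ) ≤ (m : ℝ) * ((r / 2) ^ q * (3 * (k / 2) ^ 2) ^ (n + 1)) :=
      mul_nonneg (Nat.cast_nonneg _) (mul_nonneg hrq (by positivity))
    have hden : 2 * (((n + 1).factorial : ℝ)) * (((m:ℝ) + 1) * m.factorial) ≤
        2 * ((n + 1).factorial : ℝ) * ((n + 1 + m).factorial : ℝ) := by
      apply mul_le_mul_of_nonneg_left _ (by positivity)
      have hle : (m + 1).factorial ≤ (n + 1 + m).factorial := Nat.factorial_le (by omega)
      have hfs : (m + 1).factorial = (m + 1) * m.factorial := Nat.factorial_succ m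
      calc ((m:ℝ) + 1) * m.factorial = (((m + 1) * m.factorial : ℕ) : ℝ) := by push_cast; ring
        _ = ((m + 1).factorial : ℝ) := by rw [← hfs]
        _ ≤ _ := by exact_mod_cast hle
    calc ((2 * (n + 1) + m : ℕ) : ℝ) * (r / 2) ^ (q + 2 * (n + 1)) /
          (2 * ((n + 1).factorial : ℝ) * ((n + 1 + m).factorial : ℝ))
        ≤ ((m : ℝ) * ((r / 2) ^ q * (3 * (k / 2) ^ 2) ^ (n + 1))) /
            (2 * ((n + 1).factorial : ℝ) * (((m:ℝ) + 1) * m.factorial)) :=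
          div_le_div₀ hrhs0 hnum (by positivity) hden
      _ = (m : ℝ) * (r / 2) ^ q / (2 * m.factorial) / (m + 1) *
            ((3 * (k / 2) ^ 2) ^ (n + 1) / (n + 1).factorial) := by
          field_simp
  have hs1 : Summable fun n => |besselDTerm m (n + 1) r| :=
    (summable_nat_add_iff 1).2 (summable_abs_besselDTerm m r)
  have hs2 : Summable fun n : ℕ =>
      (m : ℝ) * (r / 2) ^ q / (2 * m.factorial) / (m + 1) *
        ((3 * (k / 2) ^ 2) ^ (n + 1) / (n + 1).factorial) :=
    ((summable_nat_add_iff 1).2 (summable_bC k)).mul_left _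
  have hL0 : (0:ℝ) ≤ (m : ℝ) * (r / 2) ^ q / (2 * m.factorial) / (m + 1) := by
    apply div_nonneg (div_nonneg (mul_nonneg (Nat.cast_nonneg _)
      (pow_nonneg (by linarith) _)) (by positivity)) (by positivity)
  calc |∑' n, besselDTerm m (n + 1) r| ≤ ∑' n, |besselDTerm m (n + 1) r| := by
        have h' := norm_tsum_le_tsum_norm (f := fun n => besselDTerm m (n + 1) r)
          (by simpa only [Real.norm_eq_abs] using hs1)
        simpa only [Real.norm_eq_abs] using h'
    _ ≤ ∑' n : ℕ, (m : ℝ) * (r / 2) ^ q / (2 * m.factorial) / (m + 1) *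
          ((3 * (k / 2) ^ 2) ^ (n + 1) / (n + 1).factorial) := Summable.tsum_le_tsum key hs1 hs2
    _ = (m : ℝ) * (r / 2) ^ q / (2 * m.factorial) / (m + 1) *
          ∑' n : ℕ, (3 * (k / 2) ^ 2) ^ (n + 1) / (n + 1).factorial := tsum_mul_left
    _ ≤ (m : ℝ) * (r / 2) ^ q / (2 * m.factorial) / (m + 1) * bC k :=
        mul_le_mul_of_nonneg_left (shifted_tsum_le_bC k hk) hL0
    _ = bC k / (m + 1) * ((m : ℝ) * (r / 2) ^ q / (2 * m.factorial)) := by ring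

lemma bC_nonneg (k : ℝ) : 0 ≤ bC k := tsum_nonneg fun n => by positivity

noncomputable def gIntegrand (m : ℕ) (r : ℝ) : ℝ :=
  (deriv (besselJ m) r) ^ 2 * r + (m : ℝ) ^ 2 / r * (besselJ m r) ^ 2

noncomputable def cBm (m : ℕ) : ℝ := (m : ℝ) ^ 2 / (2 ^ (2 * m - 1) * (m.factorial : ℝ) ^ 2)

lemma cBm_pos (m : ℕ) (hm : 1 ≤ m) : 0 < cBm m := by
  have h1 : (0:ℝ) < (m:ℝ) := by exact_mod_cast hm
  have h2 : (0:ℝ) < (m.factorial : ℝ) := by exact_mod_cast Nat.factorial_pos m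
  unfold cBm; positivity

set_option maxHeartbeats 1000000 in
lemma gIntegrand_bounds (k : ℝ) (hk : 0 < k) (m : ℕ) (hm : 1 ≤ m)
    (hε : bC k / (m + 1) ≤ 1) (r : ℝ) (hr : r ∈ Set.Icc 0 k) :
    (1 - bC k / (m + 1)) ^ 2 * (cBm m * r ^ (2 * m - 1)) ≤ gIntegrand m r ∧
      gIntegrand m r ≤ (1 + bC k / (m + 1)) ^ 2 * (cBm m * r ^ (2 * m - 1)) := by
  obtain ⟨hr0, hrk⟩ := hr
  obtain ⟨q, rfl⟩ : ∃ q, m = q + 1 := ⟨m - 1, by omega⟩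
  set m := q + 1 with hmq
  have hexp : 2 * m - 1 = 2 * q + 1 := by omega
  set ε := bC k / (m + 1) with hεdef
  have hε0 : 0 ≤ ε := by
    apply div_nonneg (bC_nonneg k) (by positivity)
  rcases eq_or_lt_of_le hr0 with hr0' | hr0'
  · -- r = 0
    subst hr0'
    simp [gIntegrand, hexp, zero_pow]
  · -- 0 < r
    have hmf : (0:ℝ) < m.factorial := by exact_mod_cast Nat.factorial_pos m
    have hm0 : (0:ℝ) < (m:ℝ) := by exact_mod_cast hm
    set M := (r / 2) ^ m / (m.factorial : ℝ) with hM
    set L := (m : ℝ) * (r / 2) ^ (m - 1) / (2 * (m.factorial : ℝ)) with hL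
    have hM0 : 0 ≤ M := by
      apply div_nonneg (pow_nonneg (by linarith) _) hmf.le
    have hL0 : 0 ≤ L := by
      apply div_nonneg (mul_nonneg hm0.le (pow_nonneg (by linarith) _)) (by positivity)
    have hJ := besselJ_approx k hk m r hr0 hrk
    have hD := besselD_approx k hk m hm r hr0 hrk
    rw [← hM] at hJ
    rw [← hL] at hD
    have hJ' := abs_le.mp hJ
    have hD' := abs_le.mp hD
    have hJl : (1 - ε) * M ≤ besselJ m r := by nlinarith [hJ'.1]
    have hJu : besselJ m r ≤ (1 + ε) * M := by nlinarith [hJ'.2]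
    have hDl : (1 - ε) * L ≤ deriv (besselJ m) r := by nlinarith [hD'.1]
    have hDu : deriv (besselJ m) r ≤ (1 + ε) * L := by nlinarith [hD'.2]
    have hJ0 : 0 ≤ besselJ m r := le_trans (mul_nonneg (by linarith) hM0) hJl
    have hD0 : 0 ≤ deriv (besselJ m) r := le_trans (mul_nonneg (by linarith) hL0) hDl
    have hJsq_u : (besselJ m r) ^ 2 ≤ ((1 + ε) * M) ^ 2 := pow_le_pow_left₀ hJ0 hJu 2
    have hJsq_l : ((1 - ε) * M) ^ 2 ≤ (besselJ m r) ^ 2 :=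
      pow_le_pow_left₀ (mul_nonneg (by linarith) hM0) hJl 2
    have hDsq_u : (deriv (besselJ m) r) ^ 2 ≤ ((1 + ε) * L) ^ 2 := pow_le_pow_left₀ hD0 hDu 2
    have hDsq_l : ((1 - ε) * L) ^ 2 ≤ (deriv (besselJ m) r) ^ 2 :=
      pow_le_pow_left₀ (mul_nonneg (by linarith) hL0) hDl 2
    have hrne : r ≠ 0 := ne_of_gt hr0'
    have hmexp : m - 1 = q := by omega
    have I1 : L ^ 2 * r = cBm m * r ^ (2 * m - 1) / 2 := by
      rw [hL, hexp, hmexp]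
      unfold cBm
      rw [hexp]
      rw [div_pow, div_pow]
      push_cast
      field_simp
      ring
    have I2 : (m : ℝ) ^ 2 / r * M ^ 2 = cBm m * r ^ (2 * m - 1) / 2 := by
      rw [hM, hexp]
      unfold cBm
      rw [hexp, hmq]
      rw [div_pow, div_pow]
      push_cast
      field_simp
      ring
    have hdivnn : 0 ≤ (m:ℝ) ^ 2 / r := by positivity
    constructor
    · calc (1 - ε) ^ 2 * (cBm m * r ^ (2 * m - 1))
          = ((1 - ε) * L) ^ 2 * r + (m:ℝ) ^ 2 / r * ((1 - ε) * M) ^ 2 := by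
            rw [mul_pow, mul_pow]
            linear_combination (-(1 - ε) ^ 2) * I1 + (-(1 - ε) ^ 2) * I2
        _ ≤ gIntegrand m r := by
            unfold gIntegrand
            exact add_le_add (mul_le_mul_of_nonneg_right hDsq_l hr0)
              (mul_le_mul_of_nonneg_left hJsq_l hdivnn)
    · calc gIntegrand m r
          ≤ ((1 + ε) * L) ^ 2 * r + (m:ℝ) ^ 2 / r * ((1 + ε) * M) ^ 2 := by
            unfold gIntegrand
            exact add_le_add (mul_le_mul_of_nonneg_right hDsq_u hr0)
              (mul_le_mul_of_nonneg_left hJsq_u hdivnn)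
        _ = (1 + ε) ^ 2 * (cBm m * r ^ (2 * m - 1)) := by
            rw [mul_pow, mul_pow]
            linear_combination ((1 + ε) ^ 2) * I1 + ((1 + ε) ^ 2) * I2

lemma continuous_besselJ (m : ℕ) : Continuous (besselJ m) := by
  rw [continuous_iff_continuousAt]
  exact fun x => (hasDerivAt_besselJ m x).continuousAt

lemma measurable_gIntegrand (m : ℕ) : Measurable (gIntegrand m) := by
  have h1 : Measurable (deriv (besselJ m)) := measurable_deriv _
  exact ((h1.pow_const 2).mul measurable_id).add
    ((measurable_const.div measurable_id).mul ((continuous_besselJ m).measurable.pow_const 2))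

lemma intervalIntegrable_g (k : ℝ) (hk : 0 < k) (m : ℕ) (hm : 1 ≤ m)
    (hε : bC k / (m + 1) ≤ 1) (a : ℝ) (ha0 : 0 ≤ a) (hak : a ≤ k) :
    IntervalIntegrable (gIntegrand m) volume 0 a := by
  rw [intervalIntegrable_iff_integrableOn_Ioc_of_le ha0]
  set B := (1 + bC k / (m + 1)) ^ 2 * (cBm m * k ^ (2 * m - 1)) with hB
  apply Integrable.mono' (integrable_const B) (measurable_gIntegrand m).aestronglyMeasurable
  refine (ae_restrict_iff' measurableSet_Ioc).mpr (ae_of_all _ fun r hr => ?_)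
  have hrIcc : r ∈ Set.Icc 0 k := ⟨hr.1.le, le_trans hr.2 hak⟩
  have hbd := gIntegrand_bounds k hk m hm hε r hrIcc
  have hc := (cBm_pos m hm).le
  have hlow0 : 0 ≤ (1 - bC k / (m + 1)) ^ 2 * (cBm m * r ^ (2 * m - 1)) := by
    apply mul_nonneg (sq_nonneg _) (mul_nonneg hc (pow_nonneg hr.1.le _))
  rw [Real.norm_eq_abs, abs_of_nonneg (le_trans hlow0 hbd.1)]
  refine le_trans hbd.2 ?_
  apply mul_le_mul_of_nonneg_left _ (sq_nonneg _)
  exact mul_le_mul_of_nonneg_left (pow_le_pow_left₀ hr.1.le hrIcc.2 _) hc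

lemma integral_pow_g (m : ℕ) (hm : 1 ≤ m) (a : ℝ) :
    ∫ r in (0:ℝ)..a, cBm m * r ^ (2 * m - 1) = cBm m * (a ^ (2 * m) / (2 * m)) := by
  obtain ⟨q, rfl⟩ : ∃ q, m = q + 1 := ⟨m - 1, by omega⟩
  have he : 2 * (q + 1) - 1 = 2 * q + 1 := by omega
  rw [he, intervalIntegral.integral_const_mul, integral_pow]
  have he2 : 2 * q + 1 + 1 = 2 * (q + 1) := by omega
  rw [he2]
  rw [zero_pow (by omega : 2 * (q + 1) ≠ 0)]
  push_cast
  ring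

lemma integral_g_bounds (k : ℝ) (hk : 0 < k) (m : ℕ) (hm : 1 ≤ m)
    (hε : bC k / (m + 1) ≤ 1) (a : ℝ) (ha0 : 0 ≤ a) (hak : a ≤ k) :
    (1 - bC k / (m + 1)) ^ 2 * (cBm m * (a ^ (2 * m) / (2 * m))) ≤
        (∫ r in (0:ℝ)..a, gIntegrand m r) ∧
      (∫ r in (0:ℝ)..a, gIntegrand m r) ≤
        (1 + bC k / (m + 1)) ^ 2 * (cBm m * (a ^ (2 * m) / (2 * m))) := by
  have hint := intervalIntegrable_g k hk m hm hε a ha0 hak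
  have hcl : Continuous fun r : ℝ => (1 - bC k / (m + 1)) ^ 2 * (cBm m * r ^ (2 * m - 1)) := by
    fun_prop
  have hcu : Continuous fun r : ℝ => (1 + bC k / (m + 1)) ^ 2 * (cBm m * r ^ (2 * m - 1)) := by
    fun_prop
  constructor
  · have h := intervalIntegral.integral_mono_on ha0 (hcl.intervalIntegrable 0 a) hint
      (fun r hr => (gIntegrand_bounds k hk m hm hε r ⟨hr.1, le_trans hr.2 hak⟩).1)
    rwa [intervalIntegral.integral_const_mul, integral_pow_g m hm] at h
  · have h := intervalIntegral.integral_mono_on ha0 hint (hcu.intervalIntegrable 0 a)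
      (fun r hr => (gIntegrand_bounds k hk m hm hε r ⟨hr.1, le_trans hr.2 hak⟩).2)
    rwa [intervalIntegral.integral_const_mul, integral_pow_g m hm] at h

/-- The gradient-energy ratio
`R_m = (∫₀^{kξ} (J_m'(r)² r + (m²/r) J_m(r)²) dr) / (∫₀^{k} ⋯ dr)`. -/
noncomputable def gradRatio (k ξ : ℝ) (m : ℕ) : ℝ :=
  (∫ r in (0:ℝ)..(k * ξ),
      ((deriv (besselJ m) r) ^ 2 * r + (m : ℝ) ^ 2 / r * (besselJ m r) ^ 2)) /
  (∫ r in (0:ℝ)..k,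
      ((deriv (besselJ m) r) ^ 2 * r + (m : ℝ) ^ 2 / r * (besselJ m r) ^ 2))

lemma ratio_bounds (k ξ : ℝ) (hk : 0 < k) (hξ : ξ ∈ Set.Ioo (0 : ℝ) 1) (m : ℕ) (hm : 1 ≤ m)
    (hε2 : bC k / (m + 1) ≤ 1 / 2) :
    (1 - bC k / (m + 1)) ^ 2 / (1 + bC k / (m + 1)) ^ 2 ≤ gradRatio k ξ m / ξ ^ (2 * m) ∧
      gradRatio k ξ m / ξ ^ (2 * m) ≤
        (1 + bC k / (m + 1)) ^ 2 / (1 - bC k / (m + 1)) ^ 2 := by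
  obtain ⟨hξ0, hξ1⟩ := hξ
  set ε := bC k / (m + 1) with hεdef
  have hε0 : 0 ≤ ε := div_nonneg (bC_nonneg k) (by positivity)
  have hε1 : ε ≤ 1 := by linarith
  have h1ε : (0:ℝ) < 1 - ε := by linarith
  have h1ε' : (0:ℝ) < 1 + ε := by linarith
  set a := k * ξ with ha
  have ha0 : 0 < a := mul_pos hk hξ0
  have hak : a ≤ k := by nlinarith
  have hNum := integral_g_bounds k hk m hm hε1 a ha0.le hak
  have hDen := integral_g_bounds k hk m hm hε1 k hk.le le_rfl
  set A := cBm m * (a ^ (2 * m) / (2 * m)) with hA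
  set K := cBm m * (k ^ (2 * m) / (2 * m)) with hK
  have hm0 : (0:ℝ) < (m:ℝ) := by exact_mod_cast hm
  have hA0 : 0 < A := mul_pos (cBm_pos m hm) (div_pos (pow_pos ha0 _) (by positivity))
  have hK0 : 0 < K := mul_pos (cBm_pos m hm) (div_pos (pow_pos hk _) (by positivity))
  have hDen0 : 0 < ∫ r in (0:ℝ)..k, gIntegrand m r :=
    lt_of_lt_of_le (mul_pos (pow_pos h1ε 2) hK0) hDen.1
  have hNum0 : 0 ≤ ∫ r in (0:ℝ)..a, gIntegrand m r :=
    le_trans (mul_nonneg (sq_nonneg _) hA0.le) hNum.1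
  have hgr : gradRatio k ξ m =
      (∫ r in (0:ℝ)..a, gIntegrand m r) / (∫ r in (0:ℝ)..k, gIntegrand m r) := rfl
  have hAK : A = K * ξ ^ (2 * m) := by
    rw [hA, hK, ha, mul_pow]; ring
  have hξp : (0:ℝ) < ξ ^ (2 * m) := pow_pos hξ0 _
  have hup : gradRatio k ξ m ≤ ((1 + ε) ^ 2 * A) / ((1 - ε) ^ 2 * K) := by
    rw [hgr]
    exact div_le_div₀ (mul_nonneg (sq_nonneg _) hA0.le) hNum.2
      (mul_pos (pow_pos h1ε 2) hK0) hDen.1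
  have hlo : ((1 - ε) ^ 2 * A) / ((1 + ε) ^ 2 * K) ≤ gradRatio k ξ m := by
    rw [hgr]
    exact div_le_div₀ hNum0 hNum.1 hDen0 hDen.2
  have heql : ((1 - ε) ^ 2 * A) / ((1 + ε) ^ 2 * K) / ξ ^ (2 * m) =
      (1 - ε) ^ 2 / (1 + ε) ^ 2 := by
    rw [hAK]
    field_simp
  have hequ : ((1 + ε) ^ 2 * A) / ((1 - ε) ^ 2 * K) / ξ ^ (2 * m) =
      (1 + ε) ^ 2 / (1 - ε) ^ 2 := by
    rw [hAK]
    field_simp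
  constructor
  · rw [← heql]
    gcongr
  · rw [← hequ]
    gcongr

/-- For `0 < ξ < 1` and `k > 0`, the ratio `R_m` tends to `0`
as `m → ∞`; more precisely `R_m ∼ ξ^{2m}`. -/
theorem gradRatio_tendsto_zero (k ξ : ℝ) (hk : 0 < k) (hξ : ξ ∈ Set.Ioo (0 : ℝ) 1) :
    Tendsto (gradRatio k ξ) atTop (nhds 0) ∧
    Tendsto (fun m : ℕ => gradRatio k ξ m / ξ ^ (2 * m)) atTop (nhds 1) := by
  have hεto : Tendsto (fun m : ℕ => bC k / ((m:ℝ) + 1)) atTop (nhds 0) := by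
    have h0 := (tendsto_const_div_atTop_nhds_zero_nat (bC k)).comp (tendsto_add_atTop_nat 1)
    refine h0.congr fun m => ?_
    simp only [Function.comp_apply]
    push_cast
    ring
  have hev : ∀ᶠ m : ℕ in atTop, 1 ≤ m ∧ bC k / ((m:ℝ) + 1) ≤ 1 / 2 := by
    filter_upwards [eventually_ge_atTop 1,
      hεto.eventually_lt_const (by norm_num : (0:ℝ) < 1 / 2)] with m h1 h2
    exact ⟨h1, h2.le⟩
  have hlow : Tendsto (fun m : ℕ => (1 - bC k / ((m:ℝ) + 1)) ^ 2 / (1 + bC k / ((m:ℝ) + 1)) ^ 2)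
      atTop (nhds 1) := by
    have h1 : Tendsto (fun m : ℕ => (1 - bC k / ((m:ℝ) + 1)) ^ 2) atTop (nhds 1) := by
      have := (tendsto_const_nhds (x := (1:ℝ)).sub hεto).pow 2
      simpa using this
    have h2 : Tendsto (fun m : ℕ => (1 + bC k / ((m:ℝ) + 1)) ^ 2) atTop (nhds 1) := by
      have := (tendsto_const_nhds (x := (1:ℝ)).add hεto).pow 2
      simpa using this
    simpa [Pi.div_def] using h1.div h2 (by norm_num)
  have hupp : Tendsto (fun m : ℕ => (1 + bC k / ((m:ℝ) + 1)) ^ 2 / (1 - bC k / ((m:ℝ) + 1)) ^ 2)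
      atTop (nhds 1) := by
    have h1 : Tendsto (fun m : ℕ => (1 - bC k / ((m:ℝ) + 1)) ^ 2) atTop (nhds 1) := by
      have := (tendsto_const_nhds (x := (1:ℝ)).sub hεto).pow 2
      simpa using this
    have h2 : Tendsto (fun m : ℕ => (1 + bC k / ((m:ℝ) + 1)) ^ 2) atTop (nhds 1) := by
      have := (tendsto_const_nhds (x := (1:ℝ)).add hεto).pow 2
      simpa using this
    simpa [Pi.div_def] using h2.div h1 (by norm_num)
  have part2 : Tendsto (fun m : ℕ => gradRatio k ξ m / ξ ^ (2 * m)) atTop (nhds 1) := by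
    apply tendsto_of_tendsto_of_tendsto_of_le_of_le' hlow hupp
    · filter_upwards [hev] with m hm
      exact (ratio_bounds k ξ hk hξ m hm.1 hm.2).1
    · filter_upwards [hev] with m hm
      exact (ratio_bounds k ξ hk hξ m hm.1 hm.2).2
  refine ⟨?_, part2⟩
  have hξpow : Tendsto (fun m : ℕ => ξ ^ (2 * m)) atTop (nhds 0) := by
    have h := tendsto_pow_atTop_nhds_zero_of_lt_one hξ.1.le hξ.2
    have hg : Tendsto (fun m : ℕ => 2 * m) atTop atTop :=
      tendsto_atTop_mono (fun m : ℕ => (by simp only [id_eq]; omega : id m ≤ 2 * m)) tendsto_id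
    exact h.comp hg
  have hmul := hξpow.mul part2
  rw [zero_mul] at hmul
  refine hmul.congr fun m => ?_
  rw [mul_comm, div_mul_cancel₀ _ (pow_ne_zero _ (ne_of_gt hξ.1))]
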